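/- arXiv:1602.06042 — 2 statements merged into one kernel-verified Lean document; each statement's English description precedes it below -/
import Mathlib

section
/- Let g ∈ ℝ^p, let k̃, k ≥ 1, let i_1, …, i_{k̃} be a greedy selection for g and û = g_{B_{k̃}} the corresponding greedy projection of g with parameter k̃, and let u* = P_k^𝒢(g) be an exact projection of g onto k-group-sparse vectors. Then ‖û − g‖² ≤ e^{−k̃/k} ‖g_{supp(u*)}‖² + ‖u* − g‖². -/
/-!
Let `r j = ‖g_{B_jᶜ}‖²` be the energy of `g` left uncovered after `j` greedy steps and
`C = ‖g_{supp(u*)ᶜ}‖² ≤ ‖u* − g‖²`. The part of `supp(u*)` not yet covered by `B_j` lies in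
`k` groups, none of which carries more uncovered energy than the greedy choice, so the gain
`r j − r (j+1)` is at least `(r j − C)/k`. Hence the excess `r j − C` contracts by the factor
`1 − 1/k ≤ e^{−1/k}` at each step, starting from `r 0 − C = ‖g_{supp(u*)}‖²`.
-/

open Finset

noncomputable section

/-- The restriction of a vector to a coordinate set: agrees with `z` on `S`, zero off `S`. -/
def restrict {p : ℕ} (z : EuclideanSpace ℝ (Fin p)) (S : Finset (Fin p)) :
    EuclideanSpace ℝ (Fin p) :=
  WithLp.toLp 2 (fun i => if i ∈ S then z i else 0)

open Classical in
/-- The support of a vector, as a finite set. -/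
noncomputable def suppF {p : ℕ} (z : EuclideanSpace ℝ (Fin p)) : Finset (Fin p) :=
  Finset.univ.filter (fun i => z i ≠ 0)

/-- `w` is `k`-group-sparse w.r.t. the groups `G`. -/
def GroupSparse {p M : ℕ} (G : Fin M → Finset (Fin p)) (k : ℕ)
    (w : EuclideanSpace ℝ (Fin p)) : Prop :=
  ∃ A : Finset (Fin M), A.card ≤ k ∧ suppF w ⊆ A.biUnion G

/-- `B_j`: the union of the first `j` selected groups. -/
def partialUnion {p M m : ℕ} (G : Fin M → Finset (Fin p)) (idx : Fin m → Fin M) (j : ℕ) :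
    Finset (Fin p) :=
  (Finset.univ.filter (fun t : Fin m => (t : ℕ) < j)).biUnion (fun t => G (idx t))

/-- `idx` is a greedy selection for `z` (Algorithm 2 of the paper): at each step `j`,
the selected group maximizes the norm of `z` restricted to the yet-uncovered part. -/
def IsGreedySelection {p M m : ℕ} (G : Fin M → Finset (Fin p))
    (z : EuclideanSpace ℝ (Fin p)) (idx : Fin m → Fin M) : Prop :=
  ∀ j : Fin m, ∀ ℓ : Fin M,
    ‖restrict z (G ℓ \ partialUnion G idx (j : ℕ))‖ ≤
      ‖restrict z (G (idx j) \ partialUnion G idx (j : ℕ))‖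

/-- `w` is an exact projection of `z` onto `k`-group-sparse vectors. -/
def IsExactProj {p M : ℕ} (G : Fin M → Finset (Fin p)) (k : ℕ)
    (z w : EuclideanSpace ℝ (Fin p)) : Prop :=
  GroupSparse G k w ∧ ∀ w', GroupSparse G k w' → ‖w - z‖ ≤ ‖w' - z‖

/-- `f` satisfies restricted strong convexity / smoothness of order `k'`
with constants `α ≤ L`. -/
def RSCRSS {p M : ℕ} (G : Fin M → Finset (Fin p)) (k' : ℕ) (α L : ℝ)
    (f : EuclideanSpace ℝ (Fin p) → ℝ) : Prop :=
  ContDiff ℝ 2 f ∧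
  ∀ w : EuclideanSpace ℝ (Fin p), GroupSparse G k' w →
    ∀ v : EuclideanSpace ℝ (Fin p),
      α * ‖v‖ ^ 2 ≤ iteratedFDeriv ℝ 2 f w ![v, v] ∧
      iteratedFDeriv ℝ 2 f w ![v, v] ≤ L * ‖v‖ ^ 2

theorem Finset.sum_biUnion_le_sum_sum {ι α β : Type*} [DecidableEq α] [AddCommMonoid β]
    [PartialOrder β] [IsOrderedAddMonoid β] {f : α → β} (hf : ∀ x, 0 ≤ f x)
    (A : Finset ι) (t : ι → Finset α) :
    ∑ x ∈ A.biUnion t, f x ≤ ∑ a ∈ A, ∑ x ∈ t a, f x := by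
  rw [← Finset.sup_eq_biUnion]
  refine A.apply_sup_le_sum (f := fun s => ∑ x ∈ s, f x) sum_empty fun {s u} => ?_
  rw [← sum_union_inter]
  exact le_add_of_nonneg_right (sum_nonneg fun x _ => hf x)

theorem Finset.sum_le_card_mul_of_subset_biUnion {ι α : Type*} [DecidableEq α] {f : α → ℝ}
    (hf : ∀ x, 0 ≤ f x) {A : Finset ι} {t : ι → Finset α} {T : Finset α} {c : ℝ}
    (hT : T ⊆ A.biUnion t) (hc : ∀ a ∈ A, ∑ x ∈ t a, f x ≤ c) :
    ∑ x ∈ T, f x ≤ #A * c :=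
  calc ∑ x ∈ T, f x ≤ ∑ x ∈ A.biUnion t, f x :=
        sum_le_sum_of_subset_of_nonneg hT fun x _ _ => hf x
    _ ≤ ∑ a ∈ A, ∑ x ∈ t a, f x := sum_biUnion_le_sum_sum hf A t
    _ ≤ #A * c := by simpa using sum_le_card_nsmul A _ c hc

theorem Finset.sum_compl_sub_sum_compl_le_sum_sdiff {α : Type*} [Fintype α] [DecidableEq α]
    {f : α → ℝ} (hf : ∀ x, 0 ≤ f x) (S T : Finset α) :
    ∑ x ∈ Tᶜ, f x - ∑ x ∈ Sᶜ, f x ≤ ∑ x ∈ S \ T, f x := by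
  have hsub : Tᶜ ⊆ (S \ T) ∪ Sᶜ := fun x hx => by
    by_cases hxS : x ∈ S <;> simp_all
  have := sum_le_sum_of_subset_of_nonneg hsub fun x _ _ => hf x
  have := sum_union_inter (s₁ := S \ T) (s₂ := Sᶜ) (f := f)
  have := sum_nonneg fun x (_ : x ∈ (S \ T) ∩ Sᶜ) => hf x
  linarith

theorem Finset.sum_compl_union_add_sum_sdiff {α : Type*} [Fintype α] [DecidableEq α]
    (f : α → ℝ) (T U : Finset α) :
    ∑ x ∈ (T ∪ U)ᶜ, f x + ∑ x ∈ U \ T, f x = ∑ x ∈ Tᶜ, f x := by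
  rw [← sum_union (disjoint_left.mpr fun x hx hx' => by simp_all)]
  congr 1
  ext x
  by_cases hxT : x ∈ T <;> simp [hxT, em']

-- `k = 0` is allowed: both sides are then `1`, as `(0 : ℝ)⁻¹ = 0`.
theorem Real.one_sub_inv_pow_le_exp (k n : ℕ) : (1 - (k : ℝ)⁻¹) ^ n ≤ Real.exp (-n / k) :=
  calc (1 - (k : ℝ)⁻¹) ^ n ≤ Real.exp (-(k : ℝ)⁻¹) ^ n := by
        gcongr
        · exact sub_nonneg.mpr (Nat.cast_inv_le_one k)
        · linarith [Real.add_one_le_exp (-(k : ℝ)⁻¹)]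
    _ = Real.exp (-n / k) := by rw [← Real.exp_nat_mul]; ring_nf

theorem sub_le_one_sub_inv_pow_mul {r : ℕ → ℝ} {C : ℝ} {k n : ℕ}
    (hanti : ∀ j < n, r (j + 1) ≤ r j) (hstep : ∀ j < n, r j - C ≤ k * (r j - r (j + 1))) :
    r n - C ≤ (1 - (k : ℝ)⁻¹) ^ n * (r 0 - C) := by
  induction n with
  | zero => simp
  | succ n ih =>
    have hcontract : r (n + 1) - C ≤ (1 - (k : ℝ)⁻¹) * (r n - C) := by
      have : (r n - C) / k ≤ r n - r (n + 1) :=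
        div_le_of_le_mul₀ k.cast_nonneg (by linarith [hanti n n.lt_succ_self])
          (by linarith [hstep n n.lt_succ_self])
      rw [div_eq_mul_inv] at this
      linarith
    calc r (n + 1) - C ≤ (1 - (k : ℝ)⁻¹) * (r n - C) := hcontract
      _ ≤ (1 - (k : ℝ)⁻¹) * ((1 - (k : ℝ)⁻¹) ^ n * (r 0 - C)) := by
        gcongr
        · exact sub_nonneg.mpr (Nat.cast_inv_le_one k)
        · exact ih (fun j hj => hanti j (by omega)) (fun j hj => hstep j (by omega))
      _ = (1 - (k : ℝ)⁻¹) ^ (n + 1) * (r 0 - C) := by ring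

section Restrict

variable {p : ℕ}

theorem norm_restrict_sq (z : EuclideanSpace ℝ (Fin p)) (S : Finset (Fin p)) :
    ‖restrict z S‖ ^ 2 = ∑ i ∈ S, z i ^ 2 := by
  simp [EuclideanSpace.real_norm_sq_eq, _root_.restrict, ite_pow, sum_ite_mem]

theorem restrict_sub_self (z : EuclideanSpace ℝ (Fin p)) (S : Finset (Fin p)) :
    restrict z S - z = -restrict z Sᶜ := by
  ext i
  by_cases h : i ∈ S <;> simp [_root_.restrict, h]

theorem sum_compl_suppF_sq_le_norm_sub_sq (z w : EuclideanSpace ℝ (Fin p)) :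
    ∑ i ∈ (suppF w)ᶜ, z i ^ 2 ≤ ‖w - z‖ ^ 2 := by
  rw [EuclideanSpace.real_norm_sq_eq]
  calc ∑ i ∈ (suppF w)ᶜ, z i ^ 2 = ∑ i ∈ (suppF w)ᶜ, (w - z) i ^ 2 :=
        sum_congr rfl fun i hi => by simp_all [suppF]
    _ ≤ ∑ i, (w - z) i ^ 2 := sum_le_univ_sum_of_nonneg fun i => sq_nonneg _

end Restrict

section Greedy

variable {p M m : ℕ} {G : Fin M → Finset (Fin p)} {idx : Fin m → Fin M}

theorem partialUnion_zero : partialUnion G idx 0 = ∅ := by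
  simp [partialUnion]

theorem partialUnion_succ {j : ℕ} (hj : j < m) :
    partialUnion G idx (j + 1) = partialUnion G idx j ∪ G (idx ⟨j, hj⟩) := by
  ext i
  simp only [partialUnion, mem_biUnion, mem_filter, mem_univ, true_and, mem_union]
  constructor
  · rintro ⟨t, ht, hi⟩
    rcases Nat.lt_succ_iff_lt_or_eq.mp ht with ht | ht
    · exact Or.inl ⟨t, ht, hi⟩
    · exact Or.inr (Fin.ext (b := ⟨j, hj⟩) ht ▸ hi)
  · rintro (⟨t, ht, hi⟩ | hi)
    · exact ⟨t, ht.trans j.lt_succ_self, hi⟩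
    · exact ⟨⟨j, hj⟩, j.lt_succ_self, hi⟩

theorem IsGreedySelection.sum_sdiff_le_mul_gain {g w : EuclideanSpace ℝ (Fin p)} {k : ℕ}
    (hgreedy : IsGreedySelection G g idx) (hw : GroupSparse G k w) (j : Fin m) :
    ∑ i ∈ suppF w \ partialUnion G idx j, g i ^ 2 ≤
      k * ∑ i ∈ G (idx j) \ partialUnion G idx j, g i ^ 2 := by
  obtain ⟨A, hAcard, hAcover⟩ := hw
  have hcover : suppF w \ partialUnion G idx j ⊆ A.biUnion (G · \ partialUnion G idx j) :=
    fun i hi => by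
      obtain ⟨ℓ, hℓA, hiℓ⟩ := mem_biUnion.mp (hAcover (mem_sdiff.mp hi).1)
      exact mem_biUnion.mpr ⟨ℓ, hℓA, mem_sdiff.mpr ⟨hiℓ, (mem_sdiff.mp hi).2⟩⟩
  have hbest : ∀ ℓ ∈ A, ∑ i ∈ G ℓ \ partialUnion G idx j, g i ^ 2 ≤
      ∑ i ∈ G (idx j) \ partialUnion G idx j, g i ^ 2 := fun ℓ _ => by
    simpa only [norm_restrict_sq] using pow_le_pow_left₀ (norm_nonneg _) (hgreedy j ℓ) 2
  calc ∑ i ∈ suppF w \ partialUnion G idx j, g i ^ 2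
      ≤ #A * ∑ i ∈ G (idx j) \ partialUnion G idx j, g i ^ 2 :=
        sum_le_card_mul_of_subset_biUnion (fun _ => sq_nonneg _) hcover hbest
    _ ≤ k * ∑ i ∈ G (idx j) \ partialUnion G idx j, g i ^ 2 := by gcongr

end Greedy

theorem stmt_2_general (p M : ℕ)
    (G : Fin M → Finset (Fin p))
    (g : EuclideanSpace ℝ (Fin p))
    (ktil k : ℕ)
    (idx : Fin ktil → Fin M) (hgreedy : IsGreedySelection G g idx)
    (uhat : EuclideanSpace ℝ (Fin p)) (huhat : uhat = restrict g (partialUnion G idx ktil))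
    (ustar : EuclideanSpace ℝ (Fin p)) (hustar : IsExactProj G k g ustar) :
    ‖uhat - g‖ ^ 2 ≤
      Real.exp (-(ktil : ℝ) / (k : ℝ)) * ‖restrict g (suppF ustar)‖ ^ 2 + ‖ustar - g‖ ^ 2 := by
  set S := suppF ustar
  set C := ∑ i ∈ Sᶜ, g i ^ 2
  set residual : ℕ → ℝ := fun j => ∑ i ∈ (partialUnion G idx j)ᶜ, g i ^ 2
  have hgain {j : ℕ} (hj : j < ktil) : residual j - residual (j + 1) =
      ∑ i ∈ G (idx ⟨j, hj⟩) \ partialUnion G idx j, g i ^ 2 := by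
    have := sum_compl_union_add_sum_sdiff (g · ^ 2) (partialUnion G idx j) (G (idx ⟨j, hj⟩))
    simp only [residual, partialUnion_succ hj]
    linarith
  have hdecay : residual ktil - C ≤ (1 - (k : ℝ)⁻¹) ^ ktil * (residual 0 - C) := by
    refine sub_le_one_sub_inv_pow_mul (fun j hj => ?_) (fun j hj => ?_)
    · linarith [hgain hj, sum_nonneg fun i (_ : i ∈ G (idx ⟨j, hj⟩) \ partialUnion G idx j) =>
        sq_nonneg (g i)]
    · rw [hgain hj]
      exact (sum_compl_sub_sum_compl_le_sum_sdiff (fun _ => sq_nonneg _) _ _).trans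
        (hgreedy.sum_sdiff_le_mul_gain hustar.1 ⟨j, hj⟩)
  have hresidual_zero : residual 0 - C = ‖restrict g S‖ ^ 2 := by
    simp only [residual, C, partialUnion_zero, compl_empty, norm_restrict_sq,
      ← sum_compl_add_sum S]
    ring
  rw [huhat, restrict_sub_self, norm_neg, norm_restrict_sq, ← hresidual_zero]
  calc residual ktil ≤ (1 - (k : ℝ)⁻¹) ^ ktil * (residual 0 - C) + C := by linarith
    _ ≤ Real.exp (-ktil / k) * (residual 0 - C) + ‖ustar - g‖ ^ 2 :=
      add_le_add (mul_le_mul_of_nonneg_right (Real.one_sub_inv_pow_le_exp k ktil)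
        (hresidual_zero ▸ sq_nonneg _)) (sum_compl_suppF_sq_le_norm_sub_sq g ustar)

/-- Lemma 1 of the paper: if `û = g_{B_k̃}` is the greedy projection of `g`
with parameter `k̃` and `u* = P_k^𝒢(g)` is an exact projection onto `k`-group-sparse
vectors, then `‖û − g‖² ≤ e^{−k̃/k} ‖g_{supp(u*)}‖² + ‖u* − g‖²`. -/
theorem stmt_2 (p M : ℕ) (hp : 1 ≤ p) (hM : 1 ≤ M)
    (G : Fin M → Finset (Fin p)) (hcov : ∀ i : Fin p, ∃ j : Fin M, i ∈ G j)
    (g : EuclideanSpace ℝ (Fin p))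
    (ktil k : ℕ) (hktil : 1 ≤ ktil) (hk : 1 ≤ k)
    (idx : Fin ktil → Fin M) (hgreedy : IsGreedySelection G g idx)
    (uhat : EuclideanSpace ℝ (Fin p)) (huhat : uhat = restrict g (partialUnion G idx ktil))
    (ustar : EuclideanSpace ℝ (Fin p)) (hustar : IsExactProj G k g ustar) :
    ‖uhat - g‖ ^ 2 ≤
      Real.exp (-(ktil : ℝ) / (k : ℝ)) * ‖restrict g (suppF ustar)‖ ^ 2 + ‖ustar - g‖ ^ 2 :=
  stmt_2_general p M G g ktil k idx hgreedy uhat huhat ustar hustar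
end
end

section
/- Let f : ℝ^p → ℝ be twice continuously differentiable, let w*, w_t ∈ ℝ^p with S* = supp(w*) and S_t = supp(w_t), let 0 < α ≤ L, and set g_t = w_t − (1/L)∇f(w_t). Let S_{t+1} ⊆ {1, …, p} and w_{t+1} = (g_t)_{S_{t+1}}. Assume: (a) the approximate projection property ‖(g_t)_{S*\S_{t+1}}‖² ≤ θ ‖(g_t)_{S_{t+1}\S*}‖² + ε for some θ ≥ 0, ε ≥ 0; and (b) for every w on the line segment between w_t and w* and every v ∈ ℝ^p supported on S_t ∪ S_{t+1} ∪ S*, α‖v‖² ≤ vᵀ∇²f(w)v ≤ L‖v‖². Then ‖w_{t+1} − w*‖ ≤ (1 + √θ) · [ (1 − α/L)‖w_t − w*‖ + (1/L)‖(∇f(w*))_{S_{t+1} ∪ S*}‖ ] + √ε. -/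
/-! Split `w_{t+1} - w* = (g_t - w*)_{S_{t+1} ∪ S*} - (g_t)_{S* \ S_{t+1}}`. Since `g_t` and
`g_t - w*` agree off `S*`, the approximate projection property bounds the second piece by `√θ`
times the first plus `√ε`. The first piece is a restricted gradient step from `w_t` towards `w*`,
minus `(1/L)(∇f w*)_{S_{t+1} ∪ S*}`. The gradient step contracts by `1 - α/L`: by the mean value
theorem, `⟪v, Δ - (1/L)(∇f w_t - ∇f w*)⟫ = B(Δ, v)` with `Δ = w_t - w*` and
`B = ⟪·,·⟫ - (1/L) ∇²f(c)` for some `c` on the segment, and on vectors supported on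
`S_t ∪ S_{t+1} ∪ S*` the symmetric form `B` lies between `0` and `(1 - α/L)‖·‖²`,
so Cauchy–Schwarz for `B` gives `|B(Δ, v)| ≤ (1 - α/L)‖Δ‖‖v‖`. -/

open Finset

noncomputable section

open RealInnerProductSpace

lemma le_sqrt_mul_add_sqrt_of_sq_le {a b θ ε : ℝ} (hb : 0 ≤ b) (hθ : 0 ≤ θ) (hε : 0 ≤ ε)
    (h : a ^ 2 ≤ θ * b ^ 2 + ε) : a ≤ √θ * b + √ε := by
  refine (le_abs_self a).trans (abs_le_of_sq_le_sq ?_ (by positivity))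
  calc a ^ 2 ≤ θ * b ^ 2 + ε := h
    _ = (√θ * b) ^ 2 + √ε ^ 2 := by rw [mul_pow, Real.sq_sqrt hθ, Real.sq_sqrt hε]
    _ ≤ (√θ * b + √ε) ^ 2 := by
      nlinarith [mul_nonneg (mul_nonneg (Real.sqrt_nonneg θ) hb) (Real.sqrt_nonneg ε)]

namespace LinearMap.BilinForm

variable {M : Type*} [SeminormedAddCommGroup M] [Module ℝ M]

lemma abs_apply_le_of_mem {B : LinearMap.BilinForm ℝ M} (hB : LinearMap.IsSymm B)
    {V : Submodule ℝ M} {c : ℝ}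
    (hBV : ∀ z ∈ V, 0 ≤ B z z ∧ B z z ≤ c * ‖z‖ ^ 2) {x y : M} (hx : x ∈ V) (hy : y ∈ V) :
    |B x y| ≤ c * ‖x‖ * ‖y‖ := by
  have hcs := apply_sq_le_of_symm (B.restrict V) (fun z => (hBV z z.2).1)
    (hB.domRestrict V) ⟨x, hx⟩ ⟨y, hy⟩
  obtain ⟨hx0, hxc⟩ := hBV x hx
  obtain ⟨hy0, hyc⟩ := hBV y hy
  have hc : 0 ≤ c * ‖x‖ * ‖y‖ := by
    rcases (norm_nonneg x).eq_or_lt with h | h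
    · rw [← h]; simp
    · have : 0 ≤ c := nonneg_of_mul_nonneg_left (hx0.trans hxc) (by positivity)
      positivity
  refine abs_le_of_sq_le_sq ?_ hc
  calc B x y ^ 2 ≤ B x x * B y y := hcs
    _ ≤ (c * ‖x‖ ^ 2) * (c * ‖y‖ ^ 2) := mul_le_mul hxc hyc hy0 (hx0.trans hxc)
    _ = (c * ‖x‖ * ‖y‖) ^ 2 := by ring

end LinearMap.BilinForm

section GradientStep

variable {E : Type*} [NormedAddCommGroup E] [InnerProductSpace ℝ E] [CompleteSpace E]
  {f : E → ℝ} {α L : ℝ} {V : Submodule ℝ E} {x y v : E}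

theorem inner_sub_sub_smul_gradient_sub_le (hf : ContDiff ℝ 2 f) (hL : 0 < L) (hxy : x - y ∈ V)
    (hb : ∀ w ∈ segment ℝ x y, ∀ u ∈ V, α * ‖u‖ ^ 2 ≤ iteratedFDeriv ℝ 2 f w ![u, u] ∧
        iteratedFDeriv ℝ 2 f w ![u, u] ≤ L * ‖u‖ ^ 2) (hv : v ∈ V) :
    ⟪v, (x - y) - (1 / L) • (gradient f x - gradient f y)⟫ ≤ (1 - α / L) * ‖x - y‖ * ‖v‖ := by
  set D := fderiv ℝ (fderiv ℝ f)
  set h : E → ℝ := fun z => ⟪v, z⟫ - (1 / L) * fderiv ℝ f z v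
  have hderiv (z : E) : HasFDerivAt h
      (innerSL ℝ v - (1 / L) • (ContinuousLinearMap.apply ℝ ℝ v).comp (D z)) z := by
    have hD : HasFDerivAt (fderiv ℝ f) (D z) z :=
      ((hf.fderiv_right (m := 1) le_rfl).differentiable one_ne_zero z).hasFDerivAt
    exact (innerSL ℝ v).hasFDerivAt.sub
      (((ContinuousLinearMap.apply ℝ ℝ v).hasFDerivAt.comp z hD).const_mul (1 / L))
  obtain ⟨c, hc, hmvt⟩ := domain_mvt (fun z _ => (hderiv z).hasFDerivWithinAt) convex_univ
    (Set.mem_univ y) (Set.mem_univ x)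
  rw [segment_symm] at hc
  set B := innerₗ E - (1 / L) • (D c).toBilinForm
  have hB : LinearMap.IsSymm B := ⟨fun a b => by
    simp [B, real_inner_comm, (hf.contDiffAt.isSymmSndFDerivAt (by simp)).eq a b, D]⟩
  have hBV (z : E) (hz : z ∈ V) : 0 ≤ B z z ∧ B z z ≤ (1 - α / L) * ‖z‖ ^ 2 := by
    have hDz := hb c hc z hz
    simp only [iteratedFDeriv_two_apply, Matrix.cons_val_zero, Matrix.cons_val_one] at hDz
    have hBz : B z z = ‖z‖ ^ 2 - D c z z / L := by simp [B, div_eq_inv_mul]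
    have hupper : D c z z / L ≤ ‖z‖ ^ 2 := (div_le_iff₀ hL).2 (by linarith [hDz.2])
    have hlower : α / L * ‖z‖ ^ 2 ≤ D c z z / L := by
      rw [div_mul_eq_mul_div, div_le_div_iff_of_pos_right hL]
      exact hDz.1
    rw [hBz]
    constructor <;> linarith
  calc ⟪v, (x - y) - (1 / L) • (gradient f x - gradient f y)⟫ = h x - h y := by
        simp only [h, inner_sub_right, real_inner_smul_right, inner_gradient_right, conj_trivial]
        ring
    _ = B (x - y) v := by rw [hmvt]; simp [B, inner_sub_right, real_inner_comm v]
    _ ≤ |B (x - y) v| := le_abs_self _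
    _ ≤ (1 - α / L) * ‖x - y‖ * ‖v‖ := LinearMap.BilinForm.abs_apply_le_of_mem hB hBV hxy hv

end GradientStep

section SparseVectors

variable {p : ℕ}

lemma restrict_apply (z : EuclideanSpace ℝ (Fin p)) (S : Finset (Fin p)) (i : Fin p) :
    restrict z S i = if i ∈ S then z i else 0 := rfl

lemma mem_suppF {z : EuclideanSpace ℝ (Fin p)} {i : Fin p} : i ∈ suppF z ↔ z i ≠ 0 := by
  classical simp [suppF]

lemma apply_eq_zero_of_notMem_suppF {z : EuclideanSpace ℝ (Fin p)} {i : Fin p}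
    (h : i ∉ suppF z) : z i = 0 :=
  not_not.1 (mt mem_suppF.2 h)

lemma restrict_sub (x y : EuclideanSpace ℝ (Fin p)) (S : Finset (Fin p)) :
    restrict (x - y) S = restrict x S - restrict y S := by
  ext i
  by_cases hi : i ∈ S <;> simp [restrict_apply, hi]

lemma restrict_smul (c : ℝ) (x : EuclideanSpace ℝ (Fin p)) (S : Finset (Fin p)) :
    restrict (c • x) S = c • restrict x S := by
  ext i
  by_cases hi : i ∈ S <;> simp [restrict_apply, hi]

lemma inner_restrict_self (z : EuclideanSpace ℝ (Fin p)) (S : Finset (Fin p)) :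
    ⟪restrict z S, z⟫ = ‖restrict z S‖ ^ 2 := by
  rw [← real_inner_self_eq_norm_sq, PiLp.inner_apply, PiLp.inner_apply]
  refine Finset.sum_congr rfl fun i _ => ?_
  by_cases hi : i ∈ S <;> simp [restrict_apply, hi]

lemma norm_restrict_mono (z : EuclideanSpace ℝ (Fin p)) {S T : Finset (Fin p)} (h : S ⊆ T) :
    ‖restrict z S‖ ≤ ‖restrict z T‖ := by
  rw [EuclideanSpace.norm_eq, EuclideanSpace.norm_eq]
  refine Real.sqrt_le_sqrt (Finset.sum_le_sum fun i _ => ?_)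
  by_cases hS : i ∈ S
  · simp [restrict_apply, hS, h hS]
  · rw [restrict_apply, if_neg hS, norm_zero, zero_pow two_ne_zero]
    positivity

def supportedOn (T : Finset (Fin p)) : Submodule ℝ (EuclideanSpace ℝ (Fin p)) where
  carrier := {v | ∀ i ∉ T, v i = 0}
  add_mem' hx hy i hi := by simp [hx i hi, hy i hi]
  zero_mem' _ _ := rfl
  smul_mem' c x hx i hi := by simp [hx i hi]

lemma mem_supportedOn_iff {T : Finset (Fin p)} {v : EuclideanSpace ℝ (Fin p)} :
    v ∈ supportedOn T ↔ suppF v ⊆ T := by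
  refine ⟨fun hv i hi => ?_, fun hv i hi => apply_eq_zero_of_notMem_suppF (mt (@hv i) hi)⟩
  by_contra hiT
  exact mem_suppF.1 hi (hv i hiT)

lemma restrict_mem_supportedOn (z : EuclideanSpace ℝ (Fin p)) {S T : Finset (Fin p)}
    (h : S ⊆ T) : restrict z S ∈ supportedOn T := fun i hi => by
  simp [restrict_apply, mt (@h i) hi]

lemma restrict_sub_eq_restrict_union_sub_restrict_sdiff {g w : EuclideanSpace ℝ (Fin p)}
    {R : Finset (Fin p)} (hw : w ∈ supportedOn R) (S : Finset (Fin p)) :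
    restrict g S - w = restrict (g - w) (S ∪ R) - restrict g (R \ S) := by
  ext i
  by_cases hS : i ∈ S <;> by_cases hR : i ∈ R <;> simp [restrict_apply, hS, hR, hw i]

lemma restrict_sub_sdiff_of_mem_supportedOn {g w : EuclideanSpace ℝ (Fin p)}
    {R : Finset (Fin p)} (hw : w ∈ supportedOn R) (S : Finset (Fin p)) :
    restrict (g - w) (S \ R) = restrict g (S \ R) := by
  ext i
  by_cases hi : i ∈ S \ R
  · simp [restrict_apply, hi, hw i (Finset.mem_sdiff.1 hi).2]
  · simp [restrict_apply, hi]

theorem norm_restrict_gradient_step_sub_le {f : EuclideanSpace ℝ (Fin p) → ℝ}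
    (hf : ContDiff ℝ 2 f) {α L : ℝ} (hL : 0 < L) (hαL : α ≤ L) {x y : EuclideanSpace ℝ (Fin p)}
    {U T : Finset (Fin p)} (hUT : U ⊆ T) (hx : suppF x ⊆ T) (hy : suppF y ⊆ T)
    (hb : ∀ w ∈ segment ℝ x y, ∀ v : EuclideanSpace ℝ (Fin p), suppF v ⊆ T →
        α * ‖v‖ ^ 2 ≤ iteratedFDeriv ℝ 2 f w ![v, v] ∧
        iteratedFDeriv ℝ 2 f w ![v, v] ≤ L * ‖v‖ ^ 2) :
    ‖restrict (x - (1 / L) • gradient f x - y) U‖ ≤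
      (1 - α / L) * ‖x - y‖ + (1 / L) * ‖restrict (gradient f y) U‖ := by
  set z := (x - y) - (1 / L) • (gradient f x - gradient f y)
  have hcontr : ‖restrict z U‖ ≤ (1 - α / L) * ‖x - y‖ := by
    have h := inner_sub_sub_smul_gradient_sub_le (V := supportedOn T) hf hL
      (sub_mem (mem_supportedOn_iff.2 hx) (mem_supportedOn_iff.2 hy))
      (fun w hw u hu => hb w hw u (mem_supportedOn_iff.1 hu)) (restrict_mem_supportedOn z hUT)
    rw [inner_restrict_self] at h
    have : 0 ≤ (1 - α / L) * ‖x - y‖ :=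
      mul_nonneg (sub_nonneg.2 ((div_le_one hL).2 hαL)) (norm_nonneg _)
    nlinarith [norm_nonneg (restrict z U)]
  calc ‖restrict (x - (1 / L) • gradient f x - y) U‖
        = ‖restrict z U - (1 / L) • restrict (gradient f y) U‖ := by
          rw [← restrict_smul, ← restrict_sub]
          congr 2
          module
    _ ≤ ‖restrict z U‖ + ‖(1 / L) • restrict (gradient f y) U‖ := norm_sub_le _ _
    _ ≤ (1 - α / L) * ‖x - y‖ + (1 / L) * ‖restrict (gradient f y) U‖ := by
          rw [norm_smul, Real.norm_of_nonneg (by positivity)]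
          linarith

end SparseVectors

/-- abstract one-step IHT bound with an approximate projection property:
if `‖(g_t)_{S*\S_{t+1}}‖² ≤ θ‖(g_t)_{S_{t+1}\S*}‖² + ε` and the Hessian of `f` is between
`α` and `L` on the segment `[w_t, w*]` in directions supported on `S_t ∪ S_{t+1} ∪ S*`,
then `‖w_{t+1} − w*‖ ≤ (1 + √θ)[(1 − α/L)‖w_t − w*‖ + (1/L)‖(∇f(w*))_{S_{t+1}∪S*}‖] + √ε`. -/
theorem stmt_11 (p : ℕ)
    (f : EuclideanSpace ℝ (Fin p) → ℝ) (hf : ContDiff ℝ 2 f)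
    (wstar wt : EuclideanSpace ℝ (Fin p))
    (α L : ℝ) (hα : 0 < α) (hαL : α ≤ L)
    (gt : EuclideanSpace ℝ (Fin p)) (hgt : gt = wt - (1 / L) • gradient f wt)
    (St1 : Finset (Fin p))
    (wt1 : EuclideanSpace ℝ (Fin p)) (hwt1 : wt1 = restrict gt St1)
    (θ ε : ℝ) (hθ : 0 ≤ θ) (hε : 0 ≤ ε)
    (ha : ‖restrict gt (suppF wstar \ St1)‖ ^ 2 ≤
        θ * ‖restrict gt (St1 \ suppF wstar)‖ ^ 2 + ε)
    (hb : ∀ w ∈ segment ℝ wt wstar, ∀ v : EuclideanSpace ℝ (Fin p),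
        suppF v ⊆ suppF wt ∪ St1 ∪ suppF wstar →
        α * ‖v‖ ^ 2 ≤ iteratedFDeriv ℝ 2 f w ![v, v] ∧
        iteratedFDeriv ℝ 2 f w ![v, v] ≤ L * ‖v‖ ^ 2) :
    ‖wt1 - wstar‖ ≤
      (1 + Real.sqrt θ) *
        ((1 - α / L) * ‖wt - wstar‖ +
          (1 / L) * ‖restrict (gradient f wstar) (St1 ∪ suppF wstar)‖) +
      Real.sqrt ε := by
  set U := St1 ∪ suppF wstar
  have hwstar : wstar ∈ supportedOn (suppF wstar) := mem_supportedOn_iff.2 subset_rfl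
  have hproj : ‖restrict gt (suppF wstar \ St1)‖ ≤
      √θ * ‖restrict (gt - wstar) U‖ + √ε := by
    refine (le_sqrt_mul_add_sqrt_of_sq_le (norm_nonneg _) hθ hε ha).trans ?_
    rw [← restrict_sub_sdiff_of_mem_supportedOn hwstar]
    gcongr
    exact norm_restrict_mono _ (Finset.sdiff_subset.trans Finset.subset_union_left)
  have hstep : ‖restrict (gt - wstar) U‖ ≤
      (1 - α / L) * ‖wt - wstar‖ + (1 / L) * ‖restrict (gradient f wstar) U‖ := by
    rw [hgt]
    refine norm_restrict_gradient_step_sub_le hf (hα.trans_le hαL) hαL ?_ ?_ ?_ hb <;>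
      intro i <;> simp only [Finset.mem_union, U] <;> tauto
  calc ‖wt1 - wstar‖ = ‖restrict (gt - wstar) U - restrict gt (suppF wstar \ St1)‖ := by
        rw [hwt1, restrict_sub_eq_restrict_union_sub_restrict_sdiff hwstar]
    _ ≤ ‖restrict (gt - wstar) U‖ + ‖restrict gt (suppF wstar \ St1)‖ := norm_sub_le _ _
    _ ≤ (1 + √θ) * ‖restrict (gt - wstar) U‖ + √ε := by linarith
    _ ≤ _ := by gcongr
end
end
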